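/- Let F : ℝ → ℝ be smooth and write F', F'', F''' for its derivatives. On Ω = {(t,x,v) ∈ ℝ³ : x ≠ 0} define the vector fields Ȳ₁(t,x,v) = (1, v, −F'(t)v + e^{−2F(t)}x^{−3} + x), Ȳ₂(t,x,v) = (1, v, −F'(t)v + e^{−2F(t)}x^{−3}), Ŷ₃(t,x,v) = (0, x, −(v + xF'(t))), and Ŷ₄(t,x,v) = (0, 2v + xF'(t), 2e^{−2F(t)}x^{−3} − 2x − F'(t)(v + xF'(t)) − xF''(t)). Then the following commutation relations hold on Ω: [Ȳ₁, Ȳ₂] = Ŷ₃; [Ȳ₁, Ŷ₃] = Ŷ₄; [Ȳ₁, Ŷ₄] = (4 + F'² + 2F'')Ŷ₃ − (F'F'' + F''')(Ȳ₁ − Ȳ₂); [Ȳ₂, Ŷ₃] = 2(Ȳ₁ − Ȳ₂) + Ŷ₄; [Ȳ₂, Ŷ₄] = (2 + F'² + 2F'')Ŷ₃ − (F'F'' + F''')(Ȳ₁ − Ȳ₂); [Ŷ₃, Ŷ₄] = −2Ŷ₄ − 2(4 + F'² + 2F'')(Ȳ₁ − Ȳ₂), where the coefficient functions are evaluated at t.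 -/

import Mathlib

/-- The Lie bracket of vector fields: `[A,B](p) = DB(p)·A(p) − DA(p)·B(p)`. -/
noncomputable def lieBr {E : Type*} [NormedAddCommGroup E] [NormedSpace ℝ E]
    (A B : E → E) : E → E :=
  fun p => fderiv ℝ B p (A p) - fderiv ℝ A p (B p)

/-- `Ȳ₁(t,x,v) = (1, v, −F'(t)v + e^{−2F(t)}x^{−3} + x)`. -/
noncomputable def mpY1 (F : ℝ → ℝ) : ℝ × ℝ × ℝ → ℝ × ℝ × ℝ := fun p =>
  (1, p.2.2, -(deriv F p.1) * p.2.2 + Real.exp (-(2 * F p.1)) * (p.2.1 ^ 3)⁻¹ + p.2.1)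

/-- `Ȳ₂(t,x,v) = (1, v, −F'(t)v + e^{−2F(t)}x^{−3})`. -/
noncomputable def mpY2 (F : ℝ → ℝ) : ℝ × ℝ × ℝ → ℝ × ℝ × ℝ := fun p =>
  (1, p.2.2, -(deriv F p.1) * p.2.2 + Real.exp (-(2 * F p.1)) * (p.2.1 ^ 3)⁻¹)

/-- `Ŷ₃(t,x,v) = (0, x, −(v + xF'(t)))`. -/
noncomputable def mpY3 (F : ℝ → ℝ) : ℝ × ℝ × ℝ → ℝ × ℝ × ℝ := fun p =>
  (0, p.2.1, -(p.2.2 + p.2.1 * deriv F p.1))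

/-- `Ŷ₄(t,x,v) = (0, 2v + xF'(t), 2e^{−2F(t)}x^{−3} − 2x − F'(t)(v + xF'(t)) − xF''(t))`. -/
noncomputable def mpY4 (F : ℝ → ℝ) : ℝ × ℝ × ℝ → ℝ × ℝ × ℝ := fun p =>
  (0, 2 * p.2.2 + p.2.1 * deriv F p.1,
    2 * Real.exp (-(2 * F p.1)) * (p.2.1 ^ 3)⁻¹ - 2 * p.2.1
      - deriv F p.1 * (p.2.2 + p.2.1 * deriv F p.1) - p.2.1 * deriv (deriv F) p.1)


/-!
The four fields have constant `t`-component, so their Jacobians have vanishing first row; with the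
other rows written in the coordinate differentials `dt, dx, dv`, each bracket
`[A, B] = DB·A − DA·B` is evaluated pointwise and the six relations become identities between
rational expressions in `x, v, e^{−2F}, F', F'', F'''`, valid where `x ≠ 0`.
-/

open ContinuousLinearMap Real

theorem lieBr_eq_of_hasFDerivAt {E : Type*} [NormedAddCommGroup E] [NormedSpace ℝ E]
    {A B : E → E} {A' B' : E →L[ℝ] E} {p : E} (hA : HasFDerivAt A A' p)
    (hB : HasFDerivAt B B' p) : lieBr A B p = B' (A p) - A' (B p) := by
  rw [lieBr, hA.fderiv, hB.fderiv]

namespace MilnePinney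

local notation "dt" => fst ℝ ℝ (ℝ × ℝ)
local notation "dx" => ContinuousLinearMap.comp (fst ℝ ℝ ℝ) (snd ℝ ℝ (ℝ × ℝ))
local notation "dv" => ContinuousLinearMap.comp (snd ℝ ℝ ℝ) (snd ℝ ℝ (ℝ × ℝ))

variable {F : ℝ → ℝ} {t x v : ℝ}

theorem hasFDerivAt_comp_fst {E : Type*} [NormedAddCommGroup E] [NormedSpace ℝ E]
    {f : ℝ → ℝ} {f' : ℝ} {q : ℝ × E} (hf : HasDerivAt f f' q.1) :
    HasFDerivAt (fun q : ℝ × E => f q.1) (f' • fst ℝ ℝ E) q :=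
  hf.comp_hasFDerivAt q hasFDerivAt_fst

theorem hasFDerivAt_position : HasFDerivAt (fun q : ℝ × ℝ × ℝ => q.2.1) dx (t, x, v) :=
  hasFDerivAt_fst.comp (t, x, v) hasFDerivAt_snd

theorem hasFDerivAt_velocity : HasFDerivAt (fun q : ℝ × ℝ × ℝ => q.2.2) dv (t, x, v) :=
  hasFDerivAt_snd.comp (t, x, v) hasFDerivAt_snd

theorem hasFDerivAt_inv_position_pow_three (hx : x ≠ 0) :
    HasFDerivAt (fun q : ℝ × ℝ × ℝ => (q.2.1 ^ 3)⁻¹) (-(3 * (x ^ 4)⁻¹) • dx)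
      (t, x, v) := by
  have h : HasDerivAt (fun s : ℝ => (s ^ 3)⁻¹) (-(3 * (x ^ 4)⁻¹)) x :=
    ((hasDerivAt_pow 3 x).inv (pow_ne_zero 3 hx)).congr_deriv
      (by push_cast; field_simp)
  exact h.comp_hasFDerivAt (h₂ := fun s : ℝ => (s ^ 3)⁻¹) (t, x, v) hasFDerivAt_position

theorem hasFDerivAt_exp_neg_two_mul (hF : DifferentiableAt ℝ F t) :
    HasFDerivAt (fun q : ℝ × ℝ × ℝ => exp (-(2 * F q.1)))
      ((-(2 * deriv F t * exp (-(2 * F t)))) • dt) (t, x, v) :=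
  hasFDerivAt_comp_fst (q := (t, x, v))
    (((hF.hasDerivAt.const_mul 2).neg.exp).congr_deriv (by rw [Pi.neg_apply]; ring))

theorem hasFDerivAt_mpY2 (hF : DifferentiableAt ℝ F t) (hF' : DifferentiableAt ℝ (deriv F) t)
    (hx : x ≠ 0) :
    HasFDerivAt (mpY2 F)
      ((0 : ℝ × ℝ × ℝ →L[ℝ] ℝ).prod ((dv).prod
        (-(deriv (deriv F) t * v + 2 * deriv F t * exp (-(2 * F t)) * (x ^ 3)⁻¹) • dt
          - (3 * exp (-(2 * F t)) * (x ^ 4)⁻¹) • dx - deriv F t • dv))) (t, x, v) := by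
  have h := (hasFDerivAt_const (1 : ℝ) (t, x, v)).prodMk (hasFDerivAt_velocity.prodMk
    (((hasFDerivAt_comp_fst hF'.hasDerivAt).neg.mul hasFDerivAt_velocity).add
      ((hasFDerivAt_exp_neg_two_mul hF).mul (hasFDerivAt_inv_position_pow_three hx))))
  refine h.congr_fderiv (ContinuousLinearMap.ext fun w => ?_)
  simp only [ContinuousLinearMap.prod_apply, add_apply, sub_apply, neg_apply, smul_apply,
    comp_apply, coe_fst', coe_snd', zero_apply, smul_eq_mul, Pi.neg_apply, Prod.mk.injEq,
    true_and]
  ring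

theorem hasFDerivAt_mpY1 (hF : DifferentiableAt ℝ F t) (hF' : DifferentiableAt ℝ (deriv F) t)
    (hx : x ≠ 0) :
    HasFDerivAt (mpY1 F)
      ((0 : ℝ × ℝ × ℝ →L[ℝ] ℝ).prod ((dv).prod
        (-(deriv (deriv F) t * v + 2 * deriv F t * exp (-(2 * F t)) * (x ^ 3)⁻¹) • dt
          + (1 - 3 * exp (-(2 * F t)) * (x ^ 4)⁻¹) • dx - deriv F t • dv))) (t, x, v) := by
  have h := (hasFDerivAt_const (1 : ℝ) (t, x, v)).prodMk (hasFDerivAt_velocity.prodMk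
    ((((hasFDerivAt_comp_fst hF'.hasDerivAt).neg.mul hasFDerivAt_velocity).add
      ((hasFDerivAt_exp_neg_two_mul hF).mul (hasFDerivAt_inv_position_pow_three hx))).add
        hasFDerivAt_position))
  refine h.congr_fderiv (ContinuousLinearMap.ext fun w => ?_)
  simp only [ContinuousLinearMap.prod_apply, add_apply, sub_apply, neg_apply, smul_apply,
    comp_apply, coe_fst', coe_snd', zero_apply, smul_eq_mul, Pi.neg_apply, Prod.mk.injEq,
    true_and]
  ring

theorem hasFDerivAt_mpY3 (hF' : DifferentiableAt ℝ (deriv F) t) :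
    HasFDerivAt (mpY3 F)
      ((0 : ℝ × ℝ × ℝ →L[ℝ] ℝ).prod ((dx).prod
        (-(x * deriv (deriv F) t) • dt - deriv F t • dx - dv))) (t, x, v) := by
  have hxF₁ := hasFDerivAt_position.mul (hasFDerivAt_comp_fst (q := (t, x, v)) hF'.hasDerivAt)
  have h := (hasFDerivAt_const (0 : ℝ) (t, x, v)).prodMk
    (hasFDerivAt_position.prodMk (hasFDerivAt_velocity.add hxF₁).neg)
  refine h.congr_fderiv (ContinuousLinearMap.ext fun w => ?_)
  simp only [ContinuousLinearMap.prod_apply, add_apply, sub_apply, neg_apply, smul_apply,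
    comp_apply, coe_fst', coe_snd', zero_apply, smul_eq_mul, Prod.mk.injEq, true_and]
  ring

theorem hasFDerivAt_mpY4 (hF : DifferentiableAt ℝ F t) (hF' : DifferentiableAt ℝ (deriv F) t)
    (hF'' : DifferentiableAt ℝ (deriv (deriv F)) t) (hx : x ≠ 0) :
    HasFDerivAt (mpY4 F)
      ((0 : ℝ × ℝ × ℝ →L[ℝ] ℝ).prod
        (((x * deriv (deriv F) t) • dt + deriv F t • dx + (2 : ℝ) • dv).prod
        (-(4 * deriv F t * exp (-(2 * F t)) * (x ^ 3)⁻¹ + deriv (deriv F) t * v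
            + 2 * x * deriv F t * deriv (deriv F) t + x * deriv (deriv (deriv F)) t) • dt
          - (6 * exp (-(2 * F t)) * (x ^ 4)⁻¹ + 2 + deriv F t ^ 2 + deriv (deriv F) t) • dx
          - deriv F t • dv))) (t, x, v) := by
  have hF₁ := hasFDerivAt_comp_fst (q := (t, x, v)) hF'.hasDerivAt
  have hF₂ := hasFDerivAt_comp_fst (q := (t, x, v)) hF''.hasDerivAt
  have hxF₁ := hasFDerivAt_position.mul hF₁
  have h := (hasFDerivAt_const (0 : ℝ) (t, x, v)).prodMk
    (((hasFDerivAt_velocity.const_mul 2).add hxF₁).prodMk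
      ((((((hasFDerivAt_exp_neg_two_mul hF).const_mul 2).mul
          (hasFDerivAt_inv_position_pow_three hx)).sub (hasFDerivAt_position.const_mul 2)).sub
        (hF₁.mul (hasFDerivAt_velocity.add hxF₁))).sub (hasFDerivAt_position.mul hF₂)))
  refine h.congr_fderiv (ContinuousLinearMap.ext fun w => ?_)
  simp only [ContinuousLinearMap.prod_apply, add_apply, sub_apply, smul_apply, comp_apply,
    coe_fst', coe_snd', zero_apply, smul_eq_mul, Pi.add_apply, Pi.mul_apply, Prod.mk.injEq,
    true_and]
  constructor <;> ring

end MilnePinney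

open MilnePinney

/-- The commutation relations, on `Ω = {(t,x,v) : x ≠ 0}`, among the vector fields
`Ȳ₁, Ȳ₂, Ŷ₃, Ŷ₄` associated with the family of dissipative Milne–Pinney equations
`ẍ = −F'ẋ + ω²x + e^{−2F}x^{−3}`:
`[Ȳ₁,Ȳ₂] = Ŷ₃`, `[Ȳ₁,Ŷ₃] = Ŷ₄`,
`[Ȳ₁,Ŷ₄] = (4 + F'² + 2F'')Ŷ₃ − (F'F'' + F''')(Ȳ₁ − Ȳ₂)`,
`[Ȳ₂,Ŷ₃] = 2(Ȳ₁ − Ȳ₂) + Ŷ₄`,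
`[Ȳ₂,Ŷ₄] = (2 + F'² + 2F'')Ŷ₃ − (F'F'' + F''')(Ȳ₁ − Ȳ₂)`,
`[Ŷ₃,Ŷ₄] = −2Ŷ₄ − 2(4 + F'² + 2F'')(Ȳ₁ − Ȳ₂)`. -/
theorem mp_commutation_relations (F : ℝ → ℝ) (hF : ContDiff ℝ (⊤ : ℕ∞) F) :
    ∀ p : ℝ × ℝ × ℝ, p.2.1 ≠ 0 →
      lieBr (mpY1 F) (mpY2 F) p = mpY3 F p
      ∧ lieBr (mpY1 F) (mpY3 F) p = mpY4 F p
      ∧ lieBr (mpY1 F) (mpY4 F) p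
          = (4 + (deriv F p.1) ^ 2 + 2 * deriv (deriv F) p.1) • mpY3 F p
            - (deriv F p.1 * deriv (deriv F) p.1 + deriv (deriv (deriv F)) p.1)
              • (mpY1 F p - mpY2 F p)
      ∧ lieBr (mpY2 F) (mpY3 F) p = (2 : ℝ) • (mpY1 F p - mpY2 F p) + mpY4 F p
      ∧ lieBr (mpY2 F) (mpY4 F) p
          = (2 + (deriv F p.1) ^ 2 + 2 * deriv (deriv F) p.1) • mpY3 F p
            - (deriv F p.1 * deriv (deriv F) p.1 + deriv (deriv (deriv F)) p.1)
              • (mpY1 F p - mpY2 F p)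
      ∧ lieBr (mpY3 F) (mpY4 F) p
          = (-2 : ℝ) • mpY4 F p
            - (2 * (4 + (deriv F p.1) ^ 2 + 2 * deriv (deriv F) p.1))
              • (mpY1 F p - mpY2 F p) := by
  rintro ⟨t, x, v⟩ (hx : x ≠ 0)
  have hdiff (n : ℕ) : DifferentiableAt ℝ (deriv^[n] F) t :=
    (hF.iterate_deriv n).differentiable (by simp) t
  have hY1 := hasFDerivAt_mpY1 (F := F) (v := v) (hdiff 0) (hdiff 1) hx
  have hY2 := hasFDerivAt_mpY2 (F := F) (v := v) (hdiff 0) (hdiff 1) hx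
  have hY3 := hasFDerivAt_mpY3 (F := F) (x := x) (v := v) (hdiff 1)
  have hY4 := hasFDerivAt_mpY4 (F := F) (v := v) (hdiff 0) (hdiff 1) (hdiff 2) hx
  rw [lieBr_eq_of_hasFDerivAt hY1 hY2, lieBr_eq_of_hasFDerivAt hY1 hY3,
    lieBr_eq_of_hasFDerivAt hY1 hY4, lieBr_eq_of_hasFDerivAt hY2 hY3,
    lieBr_eq_of_hasFDerivAt hY2 hY4, lieBr_eq_of_hasFDerivAt hY3 hY4]
  refine ⟨?_, ?_, ?_, ?_, ?_, ?_⟩ <;>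
    simp only [mpY1, mpY2, mpY3, mpY4, ContinuousLinearMap.prod_apply, add_apply, sub_apply,
      smul_apply, comp_apply, coe_fst', coe_snd', zero_apply, smul_eq_mul, Prod.smul_mk,
      Prod.mk_add_mk, Prod.mk_sub_mk, Prod.mk.injEq] <;>
    refine ⟨by ring, by ring, by field_simp; ring⟩
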